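/- arXiv:1806.05517 — 3 statements merged into one kernel-verified Lean document; each statement's English description precedes it below -/
import Mathlib

section
/- Let B = [B̲, B̄] ⊂ ℝ be an interval, let 0 < γ < 1/2, τ > 1, and let Q ∈ ℕ satisfy 2/Q ≤ B̄ − B̲. Set Θ = B ∩ D(γ,τ). Then Leb(Θ) ≥ Leb(B)·(1 − 4γ/((τ−1)Q^{τ−1})) − Σ_{q=1}^{Q} Σ_{p=⌊B̲q⌋, gcd(p,q)=1}^{⌈B̄q⌉} Δ(p,q), where Δ(p,q) = max(p/q + γ/q^{τ+1} − B̲, 0) if p = ⌊B̲q⌋; Δ(p,q) = max(B̄ − p/q + γ/q^{τ+1}, 0) if p = ⌈B̄q⌉; and Δ(p,q) = min(B̄, p/q + γ/q^{τ+1}) − max(B̲, p/q − γ/q^{τ+1}) otherwise. -/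
/-!
A number `θ ∈ B` that is not `(γ,τ)`-Diophantine satisfies `|qθ - p| < γ q^(-τ)` for a reduced
fraction `p/q`, i.e. lies in the ball of radius `γ / q^(τ+1)` about `p/q`; as `γ < 1/2`, the
numerator `p` is within `1/2` of `[B̲q, B̄q]`. For `q ≤ Q` the part of such a ball inside `B` has
length at most `Δ(p,q)`. For `q > Q` there are at most `|B|q + 2 ≤ 2|B|q` such balls, of total
length at most `4γ|B|q^(-τ)`, and the integral test bounds `∑_{q>Q} q^(-τ)` by `Q^(1-τ)/(τ-1)`.
-/

open MeasureTheory

noncomputable section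

/-- `θ` is a `(γ,τ)`-Diophantine number. -/
def IsDioph (γ τ θ : ℝ) : Prop :=
  ∀ p q : ℤ, q ≠ 0 → γ * |(q : ℝ)| ^ (-τ) ≤ |(q : ℝ) * θ - (p : ℝ)|

/-- The quantity `Δ(p,q)` measuring the part of the `(p,q)`-resonance inside `[B̲,B̄]`. -/
def DeltaPQ (Bl Bu γ τ : ℝ) (p : ℤ) (q : ℕ) : ℝ :=
  if p = ⌊Bl * (q : ℝ)⌋ then
    max ((p : ℝ) / (q : ℝ) + γ / (q : ℝ) ^ (τ + 1) - Bl) 0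
  else if p = ⌈Bu * (q : ℝ)⌉ then
    max (Bu - (p : ℝ) / (q : ℝ) + γ / (q : ℝ) ^ (τ + 1)) 0
  else
    min Bu ((p : ℝ) / (q : ℝ) + γ / (q : ℝ) ^ (τ + 1))
      - max Bl ((p : ℝ) / (q : ℝ) - γ / (q : ℝ) ^ (τ + 1))

lemma tsum_rpow_neg_nat_add_le {τ : ℝ} (hτ : 1 < τ) {Q : ℕ} (hQ : 0 < Q) :
    ∑' n : ℕ, ((n + Q + 1 : ℕ) : ℝ) ^ (-τ) ≤ (Q : ℝ) ^ (1 - τ) / (τ - 1) := by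
  have hQ' : (0 : ℝ) < Q := Nat.cast_pos.mpr hQ
  have anti : AntitoneOn (fun t : ℝ => t ^ (-τ)) (Set.Ici (Q : ℝ)) := fun x hx y _ hxy =>
    Real.rpow_le_rpow_of_nonpos (hQ'.trans_le hx) hxy (by linarith)
  calc ∑' n : ℕ, ((n + Q + 1 : ℕ) : ℝ) ^ (-τ)
      ≤ ∫ t in Set.Ioi (Q : ℝ), t ^ (-τ) :=
        anti.tsum_comp_add_le_integral Q (integrableOn_Ioi_rpow_of_lt (by linarith) hQ')
          fun t ht => Real.rpow_nonneg (hQ'.trans ht).le _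
    _ = (Q : ℝ) ^ (1 - τ) / (τ - 1) := by
        rw [integral_Ioi_rpow_of_lt (by linarith) hQ', neg_add_eq_sub, neg_div, ← div_neg,
          neg_sub]

-- Passing to lowest terms shrinks the denominator, which only improves the approximation.
lemma exists_coprime_approx_of_not_isDioph {γ τ θ : ℝ} (hτ : 0 ≤ τ) (h : ¬ IsDioph γ τ θ) :
    ∃ (p : ℤ) (q : ℕ), 0 < q ∧ Int.gcd p q = 1 ∧ |q * θ - p| < γ * (q : ℝ) ^ (-τ) := by
  simp only [IsDioph, not_forall, not_le] at h
  obtain ⟨p, q, hq, hlt⟩ := h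
  set r : ℚ := Rat.divInt p q
  have hr : (r : ℝ) = p / q := by simp [r, Rat.divInt_eq_div]
  have hq' : (q : ℝ) ≠ 0 := Int.cast_ne_zero.mpr hq
  have hden : (0 : ℝ) < r.den := Nat.cast_pos.mpr r.den_pos
  have hden_le : (r.den : ℝ) ≤ |(q : ℝ)| := by
    exact_mod_cast Int.le_of_dvd (abs_pos.mpr hq) ((Rat.den_dvd p q).trans (self_dvd_abs q))
  have hγ : 0 ≤ γ := nonneg_of_mul_nonneg_left ((abs_nonneg _).trans hlt.le) (by positivity)
  refine ⟨r.num, r.den, r.den_pos, r.reduced, ?_⟩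
  calc |(r.den : ℝ) * θ - r.num| = r.den * |θ - r| := by
        rw [← abs_of_pos hden, ← abs_mul, abs_of_pos hden, Rat.cast_def]; congr 1; field_simp
    _ ≤ |(q : ℝ)| * |θ - r| := by gcongr
    _ = |q * θ - p| := by
        rw [← abs_mul, hr]; congr 1; field_simp
    _ < γ * |(q : ℝ)| ^ (-τ) := hlt
    _ ≤ γ * (r.den : ℝ) ^ (-τ) :=
        mul_le_mul_of_nonneg_left (Real.rpow_le_rpow_of_nonpos hden hden_le (neg_nonpos.mpr hτ)) hγ

-- Since `γ < 1/2`, every resonant numerator lies in this range. The range `⌊Bl q⌋..⌈Bu q⌉` of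
-- `DeltaPQ` may hold one integer more, which the count in `volume_resonantSet_le` cannot afford.
def nearbyNumerators (Bl Bu : ℝ) (q : ℕ) : Finset ℤ :=
  (Finset.Icc ⌈Bl * q - 1 / 2⌉ ⌊Bu * q + 1 / 2⌋).filter (fun p => Int.gcd p q = 1)

def resonantSet (Bl Bu γ τ : ℝ) (q : ℕ) : Set ℝ :=
  Set.Icc Bl Bu ∩ ⋃ p ∈ nearbyNumerators Bl Bu q, Metric.ball ((p : ℝ) / q) (γ / (q : ℝ) ^ (τ + 1))

lemma mem_resonantSet_of_abs_sub_lt {Bl Bu γ τ θ : ℝ} (hγ : γ < 1 / 2) (hτ : 0 ≤ τ) {p : ℤ} {q : ℕ}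
    (hq : 0 < q) (hpq : Int.gcd p q = 1) (hθ : θ ∈ Set.Icc Bl Bu)
    (happrox : |q * θ - p| < γ * (q : ℝ) ^ (-τ)) : θ ∈ resonantSet Bl Bu γ τ q := by
  have hq' : (0 : ℝ) < q := Nat.cast_pos.mpr hq
  have hγ0 : 0 ≤ γ :=
    nonneg_of_mul_nonneg_left ((abs_nonneg _).trans happrox.le) (by positivity)
  have hpow : (q : ℝ) ^ (-τ) ≤ 1 :=
    Real.rpow_le_one_of_one_le_of_nonpos (by exact_mod_cast hq) (neg_nonpos.mpr hτ)
  have hhalf := abs_lt.mp (happrox.trans_le ((mul_le_of_le_one_right hγ0 hpow).trans hγ.le))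
  have hlo : Bl * q ≤ q * θ := by rw [mul_comm]; exact mul_le_mul_of_nonneg_left hθ.1 hq'.le
  have hhi : q * θ ≤ Bu * q := by rw [mul_comm]; exact mul_le_mul_of_nonneg_right hθ.2 hq'.le
  refine ⟨hθ, Set.mem_iUnion₂.mpr ⟨p, ?_, ?_⟩⟩
  · refine Finset.mem_filter.mpr ⟨Finset.mem_Icc.mpr ⟨Int.ceil_le.mpr ?_, Int.le_floor.mpr ?_⟩, hpq⟩
      <;> linarith
  · rw [Metric.mem_ball, Real.dist_eq]
    calc |θ - p / q| = |q * θ - p| / q := by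
          rw [← abs_of_pos hq', ← abs_div, abs_of_pos hq']; congr 1; field_simp
      _ < γ * (q : ℝ) ^ (-τ) / q := div_lt_div_of_pos_right happrox hq'
      _ = γ / (q : ℝ) ^ (τ + 1) := by
          rw [Real.rpow_neg hq'.le, Real.rpow_add_one hq'.ne']; field_simp

lemma sdiff_setOf_isDioph_subset {Bl Bu γ τ : ℝ} (hγ : γ < 1 / 2) (hτ : 0 ≤ τ) :
    Set.Icc Bl Bu \ {θ | IsDioph γ τ θ} ⊆ ⋃ (q : ℕ) (_ : 0 < q), resonantSet Bl Bu γ τ q := by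
  rintro θ ⟨hθ, hnot⟩
  obtain ⟨p, q, hq, hpq, happrox⟩ := exists_coprime_approx_of_not_isDioph hτ hnot
  exact Set.mem_iUnion₂.mpr ⟨q, hq, mem_resonantSet_of_abs_sub_lt hγ hτ hq hpq hθ happrox⟩

lemma volume_inter_ball_le_deltaPQ (Bl Bu γ τ : ℝ) (p : ℤ) (q : ℕ) :
    volume (Set.Icc Bl Bu ∩ Metric.ball ((p : ℝ) / q) (γ / (q : ℝ) ^ (τ + 1)))
      ≤ ENNReal.ofReal (DeltaPQ Bl Bu γ τ p q) := by
  set c := (p : ℝ) / q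
  set r := γ / (q : ℝ) ^ (τ + 1)
  have hsub : Set.Icc Bl Bu ∩ Metric.ball c r ⊆ Set.Icc (max Bl (c - r)) (min Bu (c + r)) := by
    rw [Real.ball_eq_Ioo]
    rintro x ⟨⟨h1, h2⟩, h3, h4⟩
    exact ⟨max_le h1 h3.le, le_min h2 h4.le⟩
  refine (measure_mono hsub).trans ?_
  rw [Real.volume_Icc]
  refine ENNReal.ofReal_le_ofReal ?_
  unfold DeltaPQ
  split_ifs
  · exact le_max_of_le_left (by linarith [min_le_right Bu (c + r), le_max_left Bl (c - r)])
  · exact le_max_of_le_left (by linarith [min_le_left Bu (c + r), le_max_right Bl (c - r)])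
  · exact le_rfl

lemma deltaPQ_nonneg {Bl Bu γ τ : ℝ} (hγ : 0 ≤ γ) {p : ℤ} {q : ℕ} (hq : 0 < q)
    (hp : p ∈ Finset.Icc ⌊Bl * (q : ℝ)⌋ ⌈Bu * (q : ℝ)⌉) : 0 ≤ DeltaPQ Bl Bu γ τ p q := by
  have hq' : (0 : ℝ) < q := Nat.cast_pos.mpr hq
  have hr : 0 ≤ γ / (q : ℝ) ^ (τ + 1) := by positivity
  obtain ⟨hlo, hhi⟩ := Finset.mem_Icc.mp hp
  unfold DeltaPQ
  split_ifs with h1 h2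
  · exact le_max_right _ _
  · exact le_max_right _ _
  · have hlo' : Bl < p / q :=
      (lt_div_iff₀ hq').mpr (Int.floor_lt.mp (lt_of_le_of_ne hlo (Ne.symm h1)))
    have hhi' : p / q < Bu := (div_lt_iff₀ hq').mpr (Int.lt_ceil.mp (lt_of_le_of_ne hhi h2))
    exact sub_nonneg.mpr ((max_le hlo'.le (by linarith)).trans (le_min hhi'.le (by linarith)))

lemma nearbyNumerators_subset (Bl Bu : ℝ) (q : ℕ) :
    nearbyNumerators Bl Bu q ⊆
      (Finset.Icc ⌊Bl * (q : ℝ)⌋ ⌈Bu * (q : ℝ)⌉).filter (fun p => Int.gcd p (q : ℤ) = 1) := by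
  refine Finset.filter_subset_filter _ (Finset.Icc_subset_Icc ?_ ?_)
  · exact Int.le_ceil_iff.mpr (by linarith [Int.floor_le (Bl * (q : ℝ))])
  · exact Int.floor_le_iff.mpr (by linarith [Int.le_ceil (Bu * (q : ℝ))])

lemma volume_resonantSet_le_sum_deltaPQ {Bl Bu γ τ : ℝ} (hγ : 0 ≤ γ) {q : ℕ} (hq : 0 < q) :
    volume (resonantSet Bl Bu γ τ q) ≤ ENNReal.ofReal (∑ p ∈ (Finset.Icc ⌊Bl * (q : ℝ)⌋
      ⌈Bu * (q : ℝ)⌉).filter (fun p => Int.gcd p (q : ℤ) = 1), DeltaPQ Bl Bu γ τ p q) := by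
  rw [resonantSet, Set.inter_iUnion₂]
  calc _ ≤ ∑ p ∈ nearbyNumerators Bl Bu q,
          volume (Set.Icc Bl Bu ∩ Metric.ball ((p : ℝ) / q) (γ / (q : ℝ) ^ (τ + 1))) :=
        measure_biUnion_finset_le _ _
    _ ≤ ∑ p ∈ nearbyNumerators Bl Bu q, ENNReal.ofReal (DeltaPQ Bl Bu γ τ p q) :=
        Finset.sum_le_sum fun p _ => volume_inter_ball_le_deltaPQ Bl Bu γ τ p q
    _ ≤ ∑ p ∈ (Finset.Icc ⌊Bl * (q : ℝ)⌋ ⌈Bu * (q : ℝ)⌉).filter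
          (fun p => Int.gcd p (q : ℤ) = 1), ENNReal.ofReal (DeltaPQ Bl Bu γ τ p q) :=
        Finset.sum_le_sum_of_subset (nearbyNumerators_subset Bl Bu q)
    _ = _ := (ENNReal.ofReal_sum_of_nonneg fun p hp =>
        deltaPQ_nonneg hγ hq (Finset.mem_filter.mp hp).1).symm

lemma card_Icc_ceil_floor_le {x y : ℝ} (h : x ≤ y + 1) :
    ((Finset.Icc ⌈x⌉ ⌊y⌋).card : ℝ) ≤ y - x + 1 := by
  have hcast : ((Finset.Icc ⌈x⌉ ⌊y⌋).card : ℝ) = ((max (⌊y⌋ + 1 - ⌈x⌉) 0 : ℤ) : ℝ) := by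
    rw [Int.card_Icc, ← Int.toNat_eq_max]; rfl
  rw [hcast, Int.cast_max]
  push_cast
  exact max_le (by linarith [Int.floor_le y, Int.le_ceil x]) (by linarith)

lemma card_nearbyNumerators_le {Bl Bu : ℝ} (hB : Bl ≤ Bu) (q : ℕ) :
    ((nearbyNumerators Bl Bu q).card : ℝ) ≤ (Bu - Bl) * q + 2 := by
  have : Bl * q ≤ Bu * q := mul_le_mul_of_nonneg_right hB q.cast_nonneg
  calc ((nearbyNumerators Bl Bu q).card : ℝ)
        ≤ (Finset.Icc ⌈Bl * q - 1 / 2⌉ ⌊Bu * q + 1 / 2⌋).card :=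
        Nat.cast_le.mpr (Finset.card_filter_le _ _)
    _ ≤ (Bu * q + 1 / 2) - (Bl * q - 1 / 2) + 1 := card_Icc_ceil_floor_le (by linarith)
    _ = (Bu - Bl) * q + 2 := by ring

lemma volume_resonantSet_le {Bl Bu γ τ : ℝ} (hγ : 0 ≤ γ) {q : ℕ} (hBq : 2 ≤ (Bu - Bl) * q) :
    volume (resonantSet Bl Bu γ τ q) ≤ ENNReal.ofReal (4 * γ * (Bu - Bl) * (q : ℝ) ^ (-τ)) := by
  have hq : (0 : ℝ) < q :=
    Nat.cast_pos.mpr (Nat.pos_of_ne_zero fun h => by simp [h] at hBq; linarith)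
  have hB : Bl ≤ Bu := by nlinarith
  set r := γ / (q : ℝ) ^ (τ + 1) with hr_def
  have hr : 0 ≤ r := by positivity
  calc volume (resonantSet Bl Bu γ τ q)
      ≤ volume (⋃ p ∈ nearbyNumerators Bl Bu q, Metric.ball ((p : ℝ) / q) r) :=
        measure_mono Set.inter_subset_right
    _ ≤ ∑ p ∈ nearbyNumerators Bl Bu q, volume (Metric.ball ((p : ℝ) / q) r) :=
        measure_biUnion_finset_le _ _
    _ = ENNReal.ofReal ((nearbyNumerators Bl Bu q).card * (2 * r)) := by
        simp only [Real.volume_ball, Finset.sum_const, nsmul_eq_mul]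
        rw [ENNReal.ofReal_mul (Nat.cast_nonneg _), ENNReal.ofReal_natCast]
    _ ≤ ENNReal.ofReal (4 * γ * (Bu - Bl) * (q : ℝ) ^ (-τ)) := by
        refine ENNReal.ofReal_le_ofReal ?_
        calc ((nearbyNumerators Bl Bu q).card : ℝ) * (2 * r) ≤ 2 * ((Bu - Bl) * q) * (2 * r) :=
              mul_le_mul_of_nonneg_right (by linarith [card_nearbyNumerators_le hB q])
                (by positivity)
          _ = 4 * γ * (Bu - Bl) * (q : ℝ) ^ (-τ) := by
              rw [hr_def, Real.rpow_neg hq.le, Real.rpow_add_one hq.ne']; field_simp; ring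

lemma volume_biUnion_resonantSet_le {Bl Bu γ τ : ℝ} (hγ : 0 ≤ γ) (Q : ℕ) :
    volume (⋃ q ∈ Finset.Icc 1 Q, resonantSet Bl Bu γ τ q) ≤ ENNReal.ofReal
      (∑ q ∈ Finset.Icc 1 Q, ∑ p ∈ (Finset.Icc ⌊Bl * (q : ℝ)⌋ ⌈Bu * (q : ℝ)⌉).filter
        (fun p => Int.gcd p (q : ℤ) = 1), DeltaPQ Bl Bu γ τ p q) := by
  have hq : ∀ q ∈ Finset.Icc 1 Q, 0 < q := fun q hq => (Finset.mem_Icc.mp hq).1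
  calc _ ≤ ∑ q ∈ Finset.Icc 1 Q, volume (resonantSet Bl Bu γ τ q) :=
        measure_biUnion_finset_le _ _
    _ ≤ _ := Finset.sum_le_sum fun q h => volume_resonantSet_le_sum_deltaPQ hγ (hq q h)
    _ = _ := (ENNReal.ofReal_sum_of_nonneg fun q h => Finset.sum_nonneg fun p hp =>
        deltaPQ_nonneg hγ (hq q h) (Finset.mem_filter.mp hp).1).symm

lemma volume_iUnion_resonantSet_tail_le {Bl Bu γ τ : ℝ} (hγ : 0 ≤ γ) (hτ : 1 < τ) {Q : ℕ}
    (hQ : 0 < Q) (hBQ : 2 ≤ (Bu - Bl) * Q) :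
    volume (⋃ n : ℕ, resonantSet Bl Bu γ τ (n + Q + 1))
      ≤ ENNReal.ofReal ((Bu - Bl) * (4 * γ / ((τ - 1) * (Q : ℝ) ^ (τ - 1)))) := by
  have hB : 0 ≤ Bu - Bl := by nlinarith
  have hc : 0 ≤ 4 * γ * (Bu - Bl) := by positivity
  have hsum : Summable fun n : ℕ => 4 * γ * (Bu - Bl) * ((n + Q + 1 : ℕ) : ℝ) ^ (-τ) :=
    ((summable_nat_add_iff (Q + 1)).mpr (Real.summable_nat_rpow.mpr (by linarith))).mul_left _
  calc _ ≤ ∑' n : ℕ, volume (resonantSet Bl Bu γ τ (n + Q + 1)) := measure_iUnion_le _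
    _ ≤ ∑' n : ℕ, ENNReal.ofReal (4 * γ * (Bu - Bl) * ((n + Q + 1 : ℕ) : ℝ) ^ (-τ)) :=
        ENNReal.tsum_le_tsum fun n => volume_resonantSet_le hγ
          (hBQ.trans (mul_le_mul_of_nonneg_left (by push_cast; linarith) hB))
    _ = ENNReal.ofReal (∑' n : ℕ, 4 * γ * (Bu - Bl) * ((n + Q + 1 : ℕ) : ℝ) ^ (-τ)) :=
        (ENNReal.ofReal_tsum_of_nonneg (fun n => by positivity) hsum).symm
    _ ≤ ENNReal.ofReal (4 * γ * (Bu - Bl) * ((Q : ℝ) ^ (1 - τ) / (τ - 1))) := by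
        rw [tsum_mul_left]
        exact ENNReal.ofReal_le_ofReal
          (mul_le_mul_of_nonneg_left (tsum_rpow_neg_nat_add_le hτ hQ) hc)
    _ = _ := by
        rw [show 1 - τ = -(τ - 1) by ring, Real.rpow_neg (Nat.cast_nonneg Q)]
        congr 1; field_simp

lemma biUnion_pos_subset_union_Icc_tail {α : Type*} (s : ℕ → Set α) (Q : ℕ) :
    ⋃ (q : ℕ) (_ : 0 < q), s q ⊆ (⋃ q ∈ Finset.Icc 1 Q, s q) ∪ ⋃ n : ℕ, s (n + Q + 1) := by
  refine Set.iUnion₂_subset fun q hq => ?_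
  rcases le_or_gt q Q with hqQ | hqQ
  · exact Set.subset_union_of_subset_left
      (Set.subset_biUnion_of_mem (Finset.mem_coe.mpr (Finset.mem_Icc.mpr ⟨hq, hqQ⟩))) _
  · refine Set.subset_union_of_subset_right (Set.subset_iUnion_of_subset (q - Q - 1) ?_) _
    rw [show q - Q - 1 + Q + 1 = q by omega]

lemma measureReal_sdiff_setOf_isDioph_le {Bl Bu γ τ : ℝ} (hγ0 : 0 < γ) (hγ : γ < 1 / 2)
    (hτ : 1 < τ) {Q : ℕ} (hQ : 0 < Q) (hBQ : 2 ≤ (Bu - Bl) * Q) :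
    volume.real (Set.Icc Bl Bu \ {θ | IsDioph γ τ θ}) ≤
      (∑ q ∈ Finset.Icc 1 Q, ∑ p ∈ (Finset.Icc ⌊Bl * (q : ℝ)⌋ ⌈Bu * (q : ℝ)⌉).filter
        (fun p => Int.gcd p (q : ℤ) = 1), DeltaPQ Bl Bu γ τ p q)
        + (Bu - Bl) * (4 * γ / ((τ - 1) * (Q : ℝ) ^ (τ - 1))) := by
  have hcover : Set.Icc Bl Bu \ {θ | IsDioph γ τ θ} ⊆
      (⋃ q ∈ Finset.Icc 1 Q, resonantSet Bl Bu γ τ q) ∪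
        ⋃ n : ℕ, resonantSet Bl Bu γ τ (n + Q + 1) :=
    (sdiff_setOf_isDioph_subset hγ (by linarith)).trans (biUnion_pos_subset_union_Icc_tail _ Q)
  have hS : 0 ≤ ∑ q ∈ Finset.Icc 1 Q, ∑ p ∈ (Finset.Icc ⌊Bl * (q : ℝ)⌋ ⌈Bu * (q : ℝ)⌉).filter
      (fun p => Int.gcd p (q : ℤ) = 1), DeltaPQ Bl Bu γ τ p q :=
    Finset.sum_nonneg fun q hq => Finset.sum_nonneg fun p hp =>
      deltaPQ_nonneg hγ0.le (Finset.mem_Icc.mp hq).1 (Finset.mem_filter.mp hp).1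
  have hC : 0 ≤ (Bu - Bl) * (4 * γ / ((τ - 1) * (Q : ℝ) ^ (τ - 1))) := by
    have : 0 ≤ Bu - Bl := by nlinarith
    have : 0 < τ - 1 := by linarith
    positivity
  refine ENNReal.toReal_le_of_le_ofReal (add_nonneg hS hC) ?_
  rw [ENNReal.ofReal_add hS hC]
  exact (measure_mono hcover).trans ((measure_union_le _ _).trans (add_le_add
    (volume_biUnion_resonantSet_le hγ0.le Q) (volume_iUnion_resonantSet_tail_le hγ0.le hτ hQ hBQ)))

/-- Effective lower bound for the measure of `(γ,τ)`-Diophantine numbers in an interval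
`B = [B̲,B̄]`, in terms of a cut-off `Q` of the denominators. -/
theorem measure_diophantine_lower_bound (Bl Bu γ τ : ℝ) (hγ0 : 0 < γ) (hγ : γ < 1 / 2)
    (hτ : 1 < τ) (Q : ℕ) (hQ : 1 ≤ Q) (hQB : 2 / (Q : ℝ) ≤ Bu - Bl) :
    (volume (Set.Icc Bl Bu ∩ {θ : ℝ | IsDioph γ τ θ})).toReal ≥
      (volume (Set.Icc Bl Bu)).toReal * (1 - 4 * γ / ((τ - 1) * (Q : ℝ) ^ (τ - 1)))
        - ∑ q ∈ Finset.Icc 1 Q,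
            ∑ p ∈ (Finset.Icc ⌊Bl * (q : ℝ)⌋ ⌈Bu * (q : ℝ)⌉).filter
                (fun p => Int.gcd p (q : ℤ) = 1),
              DeltaPQ Bl Bu γ τ p q := by
  have hQ' : (0 : ℝ) < Q := Nat.cast_pos.mpr hQ
  have hBQ : 2 ≤ (Bu - Bl) * Q := (div_le_iff₀ hQ').mp hQB
  have hB : Bl ≤ Bu := by linarith [(div_pos two_pos hQ').trans_le hQB]
  have hbad := measureReal_sdiff_setOf_isDioph_le hγ0 hγ hτ hQ hBQ
  have hgood := le_measureReal_sdiff (μ := volume) (s₁ := Set.Icc Bl Bu)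
    (s₂ := Set.Icc Bl Bu \ {θ | IsDioph γ τ θ})
    ((measure_mono Set.sdiff_subset).trans_lt measure_Icc_lt_top).ne
  rw [Set.sdiff_sdiff_right_self] at hgood
  change volume.real _ ≥ volume.real _ * _ - _
  rw [Real.volume_real_Icc_of_le hB] at hgood ⊢
  linarith
end
end

section
/- Let 0 < γ < 1/2 and τ > 1. Then the Lebesgue measure of the set of (γ,τ)-Diophantine numbers in [0,1] satisfies Leb([0,1] ∩ D(γ,τ)) ≥ 1 − 2γ·Σ_{q=1}^{∞} φ(q)/q^{τ+1} = 1 − 2γ·ζ(τ)/ζ(τ+1), where φ is Euler's totient function and ζ is the Riemann zeta function. -/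
open MeasureTheory

noncomputable section

/-!
A number in `[0,1]` that is not `(γ,τ)`-Diophantine lies within `γ / b ^ (τ + 1)` of a reduced
fraction `a / b ∈ [0,1]`. For `b ≥ 2` there are `φ(b)` such fractions, while for `b = 1` the two
fractions `0` and `1` only contribute half-intervals inside `[0,1]`; so a union bound shows that the
non-Diophantine part of `[0,1]` has measure at most `2γ ∑ φ(b) / b ^ (τ + 1)`. This series is the
Dirichlet series of `φ` at `τ + 1`, which equals `ζ(τ) / ζ(τ + 1)` because `1 ∗ φ = id`.
-/

open Metric Set
open scoped LSeries.notation

lemma exists_rat_abs_sub_lt_of_not_isDioph {γ τ θ : ℝ} (hτ : -1 ≤ τ) (h : ¬IsDioph γ τ θ) :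
    ∃ x : ℚ, |θ - x| < γ / (x.den : ℝ) ^ (τ + 1) := by
  simp only [IsDioph, not_forall, not_le] at h
  obtain ⟨p, q, hq, hlt⟩ := h
  have hq' : (0 : ℝ) < |(q : ℝ)| := by positivity
  have hγ : 0 < γ := pos_of_mul_pos_left ((abs_nonneg _).trans_lt hlt) (by positivity)
  have hden : (((p : ℚ) / q).den : ℝ) ≤ |(q : ℝ)| := by
    have hdvd := Rat.den_dvd p q
    rw [Rat.divInt_eq_div] at hdvd
    exact_mod_cast Int.le_of_dvd (abs_pos.mpr hq) ((dvd_abs _ _).mpr hdvd)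
  refine ⟨p / q, ?_⟩
  calc |θ - (((p : ℚ) / q : ℚ) : ℝ)| = |(q : ℝ) * θ - p| / |(q : ℝ)| := by
        rw [← abs_div]; push_cast; congr 1; field_simp
    _ < γ * |(q : ℝ)| ^ (-τ) / |(q : ℝ)| := by gcongr
    _ = γ / |(q : ℝ)| ^ (τ + 1) := by
        rw [Real.rpow_add_one hq'.ne', Real.rpow_neg hq'.le]; field_simp
    _ ≤ γ / (((p : ℚ) / q).den : ℝ) ^ (τ + 1) := by
        gcongr
        linarith

lemma Rat.num_nonneg_and_le_den_of_abs_sub_lt {θ : ℝ} {x : ℚ} (hθ : θ ∈ Icc (0 : ℝ) 1)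
    (h : |θ - x| < 1 / x.den) : 0 ≤ x.num ∧ x.num ≤ x.den := by
  have hd : (0 : ℝ) < x.den := by exact_mod_cast x.den_pos
  have hx : |x.den * θ - x.num| < 1 := by
    have hscale : (x.den : ℝ) * θ - x.num = (θ - x) * x.den := by
      rw [Rat.cast_def]; field_simp
    rwa [hscale, abs_mul, abs_of_pos hd, ← lt_div_iff₀ hd]
  obtain ⟨hlo, hhi⟩ := abs_lt.mp hx
  have hnum_lo : (-1 : ℝ) < x.num := by nlinarith [hθ.1]
  have hnum_hi : (x.num : ℝ) < x.den + 1 := by nlinarith [hθ.2]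
  constructor
  · have : (-1 : ℤ) < x.num := by exact_mod_cast hnum_lo
    omega
  · have : x.num < (x.den : ℤ) + 1 := by exact_mod_cast hnum_hi
    omega

def reducedNumerators (b : ℕ) : Finset ℕ :=
  {a ∈ Finset.range (b + 1) | b.Coprime a}

lemma exists_mem_reducedNumerators_of_not_isDioph {γ τ θ : ℝ} (hγ : γ ≤ 1) (hτ : 0 ≤ τ)
    (hθ : θ ∈ Icc (0 : ℝ) 1) (h : ¬IsDioph γ τ θ) :
    ∃ b a, a ∈ reducedNumerators b ∧ θ ∈ ball ((a : ℝ) / b) (γ / (b : ℝ) ^ (τ + 1)) := by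
  obtain ⟨x, hx⟩ := exists_rat_abs_sub_lt_of_not_isDioph (by linarith) h
  have hd : (1 : ℝ) ≤ x.den := by exact_mod_cast x.den_pos
  have hx' : |θ - x| < 1 / x.den := hx.trans_le <| by
    gcongr
    exact Real.self_le_rpow_of_one_le hd (by linarith)
  obtain ⟨hnum0, hnum_le⟩ := Rat.num_nonneg_and_le_den_of_abs_sub_lt hθ hx'
  have hnum : ((x.num.toNat : ℕ) : ℝ) = x.num := by exact_mod_cast Int.toNat_of_nonneg hnum0
  refine ⟨x.den, x.num.toNat, ?_, ?_⟩
  · have hcop : x.den.Coprime x.num.toNat := by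
      rw [show x.num.toNat = x.num.natAbs by omega]
      exact x.reduced.symm
    simpa [reducedNumerators, Nat.lt_succ_iff] using ⟨by omega, hcop⟩
  · rw [mem_ball, Real.dist_eq]
    convert hx using 3
    rw [hnum, Rat.cast_def]

lemma card_reducedNumerators {b : ℕ} (hb : 2 ≤ b) : (reducedNumerators b).card = b.totient := by
  rw [Nat.totient_eq_card_coprime, reducedNumerators, Finset.range_add_one, Finset.filter_insert,
    if_neg (by rw [Nat.coprime_self]; omega)]

lemma volume_Icc_inter_ball_zero_union_ball_one_le {r : ℝ} (hr : 0 ≤ r) :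
    volume (Icc (0 : ℝ) 1 ∩ (ball 0 r ∪ ball 1 r)) ≤ ENNReal.ofReal (2 * r) := by
  have hsub : Icc (0 : ℝ) 1 ∩ (ball 0 r ∪ ball 1 r) ⊆ Ico 0 r ∪ Ioc (1 - r) 1 := by
    rintro θ ⟨⟨h0, h1⟩, hθ | hθ⟩ <;> rw [Real.ball_eq_Ioo] at hθ
    · exact Or.inl ⟨h0, by linarith [hθ.2]⟩
    · exact Or.inr ⟨by linarith [hθ.1], h1⟩
  calc volume (Icc (0 : ℝ) 1 ∩ (ball 0 r ∪ ball 1 r))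
      ≤ volume (Ico (0 : ℝ) r) + volume (Ioc (1 - r) 1) := (measure_mono hsub).trans
        (measure_union_le _ _)
    _ = ENNReal.ofReal (2 * r) := by
        rw [Real.volume_Ico, Real.volume_Ioc, ← ENNReal.ofReal_add] <;> ring_nf <;> linarith

lemma volume_Icc_inter_biUnion_reducedNumerators_le (b : ℕ) {r : ℝ} (hr : 0 ≤ r) :
    volume (Icc (0 : ℝ) 1 ∩ ⋃ a ∈ reducedNumerators b, ball ((a : ℝ) / b) r) ≤
      ENNReal.ofReal (2 * r * b.totient) := by
  rcases Nat.lt_or_ge b 2 with hb | hb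
  · interval_cases b
    · simp [show reducedNumerators 0 = ∅ by decide]
    · simpa [show reducedNumerators 1 = {0, 1} by decide] using
        volume_Icc_inter_ball_zero_union_ball_one_le hr
  calc volume (Icc (0 : ℝ) 1 ∩ ⋃ a ∈ reducedNumerators b, ball ((a : ℝ) / b) r)
      ≤ ∑ a ∈ reducedNumerators b, volume (ball ((a : ℝ) / b) r) :=
        (measure_mono inter_subset_right).trans (measure_biUnion_finset_le _ _)
    _ = ENNReal.ofReal (2 * r * b.totient) := by
        simp only [Real.volume_ball, Finset.sum_const, card_reducedNumerators hb, nsmul_eq_mul]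
        rw [ENNReal.ofReal_mul' (Nat.cast_nonneg _), ENNReal.ofReal_natCast, mul_comm]

lemma summable_totient_div_rpow {τ : ℝ} (hτ : 1 < τ) :
    Summable fun q : ℕ ↦ (q.totient : ℝ) / (q : ℝ) ^ (τ + 1) := by
  refine (Real.summable_nat_rpow_inv.mpr hτ).of_nonneg_of_le (fun _ ↦ by positivity) fun q ↦ ?_
  rcases eq_or_ne q 0 with rfl | hq
  · simpa using Real.rpow_nonneg le_rfl τ
  have hq' : (0 : ℝ) < q := by positivity
  rw [Real.rpow_add_one hq'.ne', div_le_iff₀ (by positivity), inv_mul_cancel_left₀ (by positivity)]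
  exact_mod_cast q.totient_le

lemma volume_Icc_diff_isDioph_le {γ τ : ℝ} (hγ0 : 0 ≤ γ) (hγ : γ ≤ 1) (hτ : 1 < τ) :
    volume (Icc (0 : ℝ) 1 \ {θ | IsDioph γ τ θ}) ≤
      ENNReal.ofReal (2 * γ * ∑' q : ℕ, (q.totient : ℝ) / (q : ℝ) ^ (τ + 1)) := by
  set r : ℕ → ℝ := fun b ↦ γ / (b : ℝ) ^ (τ + 1)
  have hcover : Icc (0 : ℝ) 1 \ {θ | IsDioph γ τ θ} ⊆
      ⋃ b, Icc (0 : ℝ) 1 ∩ ⋃ a ∈ reducedNumerators b, ball ((a : ℝ) / b) (r b) := by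
    rintro θ ⟨hθ, hnot⟩
    obtain ⟨b, a, ha, hball⟩ :=
      exists_mem_reducedNumerators_of_not_isDioph hγ (by linarith) hθ hnot
    exact mem_iUnion.mpr ⟨b, hθ, mem_biUnion ha hball⟩
  have hterm (b : ℕ) : 2 * r b * b.totient = 2 * γ * ((b.totient : ℝ) / (b : ℝ) ^ (τ + 1)) := by
    simp only [r]; ring
  calc volume (Icc (0 : ℝ) 1 \ {θ | IsDioph γ τ θ})
      ≤ ∑' b, volume (Icc (0 : ℝ) 1 ∩ ⋃ a ∈ reducedNumerators b, ball ((a : ℝ) / b) (r b)) :=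
        (measure_mono hcover).trans (measure_iUnion_le _)
    _ ≤ ∑' b : ℕ, ENNReal.ofReal (2 * r b * b.totient) :=
        ENNReal.tsum_le_tsum fun b ↦
          volume_Icc_inter_biUnion_reducedNumerators_le b (by positivity)
    _ = ENNReal.ofReal (2 * γ * ∑' q : ℕ, (q.totient : ℝ) / (q : ℝ) ^ (τ + 1)) := by
        simp only [hterm]
        rw [← ENNReal.ofReal_tsum_of_nonneg (fun _ ↦ by positivity)
          ((summable_totient_div_rpow hτ).mul_left _), tsum_mul_left]

lemma one_convolution_totient :
    (1 : ℕ → ℂ) ⍟ (fun n ↦ (n.totient : ℂ)) = fun n : ℕ ↦ (n : ℂ) := by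
  funext n
  rcases eq_or_ne n 0 with rfl | hn
  · simp [LSeries.convolution_map_zero]
  rw [LSeries.convolution_def]
  simp only [Pi.one_apply, one_mul]
  rw [Nat.sum_divisorsAntidiagonal' (f := fun _ d ↦ (d.totient : ℂ)), ← Nat.cast_sum,
    Nat.sum_totient]

lemma LSeries_natCast_eq_riemannZeta_sub_one {s : ℂ} (hs : 2 < s.re) :
    L (fun n : ℕ ↦ (n : ℂ)) s = riemannZeta (s - 1) := by
  rw [← LSeries_one_eq_riemannZeta (by simp; linarith)]
  refine tsum_congr fun n ↦ ?_
  rcases eq_or_ne n 0 with rfl | hn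
  · simp
  have hn' : (n : ℂ) ≠ 0 := Nat.cast_ne_zero.mpr hn
  rw [LSeries.term_of_ne_zero hn, LSeries.term_of_ne_zero hn, Pi.one_apply,
    Complex.cpow_sub _ _ hn', Complex.cpow_one, one_div_div]

lemma LSeriesSummable_totient {s : ℂ} (hs : 2 < s.re) :
    LSeriesSummable (fun n ↦ (n.totient : ℂ)) s :=
  LSeriesSummable_of_le_const_mul_rpow (x := 2) hs ⟨1, fun n _ ↦ by
    rw [Complex.norm_natCast, one_mul, show (2 : ℝ) - 1 = 1 by norm_num, Real.rpow_one]
    exact_mod_cast n.totient_le⟩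

lemma LSeries_totient_eq_riemannZeta_div {s : ℂ} (hs : 2 < s.re) :
    L (fun n ↦ (n.totient : ℂ)) s = riemannZeta (s - 1) / riemannZeta s := by
  have hs1 : 1 < s.re := by linarith
  rw [eq_div_iff (riemannZeta_ne_zero_of_one_lt_re hs1),
    ← LSeries_natCast_eq_riemannZeta_sub_one hs, ← one_convolution_totient,
    LSeries_convolution' (LSeriesSummable_one_iff.mpr hs1) (LSeriesSummable_totient hs),
    LSeries_one_eq_riemannZeta hs1, mul_comm]

lemma LSeries_ofReal_eq_tsum (a : ℕ → ℝ) {x : ℝ} (hx : x ≠ 0) :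
    L (fun n ↦ (a n : ℂ)) x = ((∑' n : ℕ, a n / (n : ℝ) ^ x : ℝ) : ℂ) := by
  rw [Complex.ofReal_tsum]
  refine tsum_congr fun n ↦ ?_
  rcases eq_or_ne n 0 with rfl | hn
  · simp [Real.zero_rpow hx]
  rw [LSeries.term_of_ne_zero hn, Complex.ofReal_div, Complex.ofReal_cpow (Nat.cast_nonneg n),
    Complex.ofReal_natCast]

lemma tsum_totient_div_rpow {τ : ℝ} (hτ : 1 < τ) :
    ((∑' q : ℕ, (q.totient : ℝ) / (q : ℝ) ^ (τ + 1) : ℝ) : ℂ) =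
      riemannZeta τ / riemannZeta (τ + 1) := by
  have h := LSeries_totient_eq_riemannZeta_div (s := ((τ + 1 : ℝ) : ℂ)) (by simp; linarith)
  have hL := LSeries_ofReal_eq_tsum (fun n ↦ (n.totient : ℝ)) (x := τ + 1) (by linarith)
  simp only [Complex.ofReal_natCast] at hL
  rw [hL] at h
  simpa using h

/-- The measure of `(γ,τ)`-Diophantine numbers in `[0,1]` is at least
`1 − 2γ Σ_{q≥1} φ(q)/q^{τ+1} = 1 − 2γ ζ(τ)/ζ(τ+1)`. -/
theorem measure_diophantine_unit_interval (γ τ : ℝ) (hγ0 : 0 < γ) (hγ : γ < 1 / 2)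
    (hτ : 1 < τ) :
    (volume (Set.Icc (0 : ℝ) 1 ∩ {θ : ℝ | IsDioph γ τ θ})).toReal ≥
        1 - 2 * γ * ∑' q : ℕ, (Nat.totient q : ℝ) / (q : ℝ) ^ (τ + 1) ∧
      ((∑' q : ℕ, (Nat.totient q : ℝ) / (q : ℝ) ^ (τ + 1) : ℝ) : ℂ) =
        riemannZeta (τ : ℂ) / riemannZeta ((τ : ℝ) + 1 : ℂ) := by
  refine ⟨?_, tsum_totient_div_rpow hτ⟩
  set S := ∑' q : ℕ, (q.totient : ℝ) / (q : ℝ) ^ (τ + 1)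
  have hbad := volume_Icc_diff_isDioph_le hγ0.le (by linarith) hτ
  have hsplit := measure_le_inter_add_sdiff volume (Icc (0 : ℝ) 1) {θ | IsDioph γ τ θ}
  rw [Real.volume_Icc, sub_zero, ENNReal.ofReal_one] at hsplit
  have hgood : ENNReal.ofReal (1 - 2 * γ * S) ≤ volume (Icc (0 : ℝ) 1 ∩ {θ | IsDioph γ τ θ}) := by
    have hS : 0 ≤ S := tsum_nonneg fun q ↦ by positivity
    rw [ENNReal.ofReal_sub _ (by positivity), ENNReal.ofReal_one, tsub_le_iff_right]
    exact hsplit.trans (by gcongr)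
  exact (ENNReal.ofReal_le_iff_le_toReal
    (measure_ne_top_of_subset inter_subset_left measure_Icc_lt_top.ne)).mp hgood
end
end

section
/- Let N ∈ ℕ be even and let F(x) = Σ_{k=−N/2}^{N/2−1} F̂_k e^{2πikx} be a trigonometric polynomial with complex coefficients satisfying F̂_{−N/2} = 0 and F̂_{−k} = conj(F̂_k) for all k (so that F is real-valued on ℝ). Then for every ρ ≥ 0, sup_{x ∈ 𝕋̄_ρ} |F(x)| ≤ max_{0 ≤ j < N} |F(j/N + iρ)| + (1/(2N))·Σ_{k=−N/2}^{N/2−1} 2π|k|·|F̂_k|·e^{2π|k|ρ}. -/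
/-!
`F` is entire and bounded on the closed strip, so by Phragmén–Lindelöf `|F|` is bounded there by
its bound on the two boundary lines; since `F (conj x) = conj (F x)`, it suffices to treat the line
`Im x = ρ`. Up to a period, every point of that line is within `1 / (2N)` of a grid point
`j / N + iρ`, and `F'` is bounded on the line by `Σ_k 2π|k||F̂_k|e^{2π|k|ρ}`, so the mean value
inequality finishes the proof.
-/

noncomputable section

def stripC (ρ : ℝ) : Set ℂ := {x : ℂ | |x.im| ≤ ρ}

open Complex Finset ComplexConjugate
open scoped Real

def trigPoly (s : Finset ℤ) (c : ℤ → ℂ) (z : ℂ) : ℂ :=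
  ∑ k ∈ s, c k * cexp (2 * π * I * k * z)

theorem exists_int_abs_sub_div_le (t : ℝ) {N : ℕ} (hN : 0 < N) :
    ∃ j : ℤ, |t - j / N| ≤ 1 / (2 * N) := by
  have hN' : (0 : ℝ) < N := Nat.cast_pos.2 hN
  refine ⟨round (N * t), ?_⟩
  have h : t - round (N * t) / N = (N * t - round (N * t)) / N := by field_simp
  rw [h, abs_div, abs_of_pos hN', div_le_div_iff₀ hN' (by positivity)]
  nlinarith [abs_sub_round (N * t : ℝ)]

theorem Function.Periodic.exists_mem_range_eq_div {α : Type*} {f : ℝ → α}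
    (hf : Function.Periodic f 1) {N : ℕ} (hN : 0 < N) (j : ℤ) :
    ∃ i ∈ range N, f (j / N) = f (i / N) := by
  have hmod : 0 ≤ j % N := Int.emod_nonneg _ (by omega)
  have hlt : j % N < N := Int.emod_lt_of_pos j (by omega)
  refine ⟨(j % N).toNat, mem_range.2 (by omega), ?_⟩
  have hj : (j : ℝ) / N = ((j % N).toNat : ℝ) / N + (j / N : ℤ) * 1 := by
    have : (j : ℝ) = N * (j / N : ℤ) + ((j % N).toNat : ℤ) := by
      rw [Int.toNat_of_nonneg hmod]; exact_mod_cast (Int.mul_ediv_add_emod j N).symm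
    rw [this]; field_simp; push_cast; ring
  rw [hj, hf.int_mul]

theorem Function.Periodic.norm_le_sup'_grid_add {E : Type*} [NormedAddCommGroup E]
    [NormedSpace ℝ E] {f f' : ℝ → E} {D : ℝ} (hper : Function.Periodic f 1)
    (hf : ∀ t, HasDerivAt f (f' t) t) (hf' : ∀ t, ‖f' t‖ ≤ D) {N : ℕ} (hN : (range N).Nonempty)
    (t : ℝ) : ‖f t‖ ≤ (range N).sup' hN (fun j => ‖f (j / N)‖) + 1 / (2 * N) * D := by
  have hN0 : 0 < N := Nat.pos_of_ne_zero (nonempty_range_iff.1 hN)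
  obtain ⟨j, hj⟩ := exists_int_abs_sub_div_le t hN0
  obtain ⟨i, hi, hfi⟩ := hper.exists_mem_range_eq_div hN0 j
  have hmvt : ‖f t - f (j / N)‖ ≤ D * ‖t - j / N‖ :=
    convex_univ.norm_image_sub_le_of_norm_hasDerivWithin_le (fun x _ => (hf x).hasDerivWithinAt)
      (fun x _ => hf' x) (Set.mem_univ _) (Set.mem_univ _)
  have hD : 0 ≤ D := (norm_nonneg _).trans (hf' 0)
  calc ‖f t‖ ≤ ‖f (j / N)‖ + ‖f t - f (j / N)‖ := norm_le_insert' _ _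
    _ ≤ (range N).sup' hN (fun j => ‖f (j / N)‖) + 1 / (2 * N) * D := by
      gcongr
      · exact hfi ▸ le_sup' (fun j : ℕ => ‖f (j / N)‖) hi
      · exact hmvt.trans (by rw [mul_comm]; gcongr; exact hj)

theorem norm_le_of_norm_le_on_boundary_stripC {E : Type*} [NormedAddCommGroup E]
    [NormedSpace ℂ E] {f : ℂ → E} (hf : Differentiable ℂ f) {ρ B C : ℝ}
    (hB : ∀ z ∈ stripC ρ, ‖f z‖ ≤ B) (hC : ∀ z : ℂ, |z.im| = ρ → ‖f z‖ ≤ C) {z : ℂ}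
    (hz : z ∈ stripC ρ) : ‖f z‖ ≤ C := by
  replace hz : |z.im| ≤ ρ := hz
  rcases eq_or_lt_of_le hz with h | h
  · exact hC z h
  have hρ : 0 < ρ := (abs_nonneg _).trans_lt h
  -- boundedness is the growth condition of Phragmén–Lindelöf with `c = B = 0`
  have hbdd : f =O[Filter.comap (_root_.abs ∘ re) Filter.atTop ⊓
      Filter.principal (im ⁻¹' Set.Ioo (-ρ) ρ)] fun w => Real.exp (0 * Real.exp (0 * |w.re|)) :=
    Asymptotics.IsBigO.of_bound B <| Filter.eventually_inf_principal.2 <|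
      Filter.Eventually.of_forall fun w hw => by simpa using hB w (abs_lt.2 hw).le
  exact PhragmenLindelof.horizontal_strip hf.diffContOnCl
    ⟨0, div_pos Real.pi_pos (by linarith), 0, hbdd⟩
    (fun w hw => hC w (by rw [hw, abs_neg, abs_of_pos hρ]))
    (fun w hw => hC w (by rw [hw, abs_of_pos hρ])) (abs_le.1 hz).1 (abs_le.1 hz).2

theorem norm_cexp_two_pi_I_mul_le (k : ℤ) {ρ : ℝ} {z : ℂ} (hz : z ∈ stripC ρ) :
    ‖cexp (2 * π * I * k * z)‖ ≤ Real.exp (2 * π * |(k : ℝ)| * ρ) := by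
  rw [norm_exp]
  gcongr
  calc (2 * π * I * k * z).re = 2 * π * -(k * z.im) := by simp; ring
    _ ≤ 2 * π * (|(k : ℝ)| * ρ) := by
      gcongr
      exact (neg_le_abs _).trans (abs_mul (k : ℝ) z.im ▸ by gcongr; exact hz)
    _ = 2 * π * |(k : ℝ)| * ρ := by ring

section TrigPoly

variable (s : Finset ℤ) (c : ℤ → ℂ)

theorem norm_trigPoly_le {ρ : ℝ} {z : ℂ} (hz : z ∈ stripC ρ) :
    ‖trigPoly s c z‖ ≤ ∑ k ∈ s, ‖c k‖ * Real.exp (2 * π * |(k : ℝ)| * ρ) :=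
  (norm_sum_le _ _).trans <| sum_le_sum fun k _ => by
    rw [norm_mul]; exact mul_le_mul_of_nonneg_left (norm_cexp_two_pi_I_mul_le k hz) (norm_nonneg _)

theorem hasDerivAt_trigPoly (z : ℂ) :
    HasDerivAt (trigPoly s c) (trigPoly s (fun k => 2 * π * I * k * c k) z) z :=
  HasDerivAt.fun_sum fun k _ =>
    (((hasDerivAt_id' z).const_mul (2 * π * I * k)).cexp.const_mul (c k)).congr_deriv (by ring)

theorem differentiable_trigPoly : Differentiable ℂ (trigPoly s c) :=
  fun z => (hasDerivAt_trigPoly s c z).differentiableAt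

theorem trigPoly_periodic : Function.Periodic (trigPoly s c) 1 := fun z =>
  sum_congr rfl fun k _ => by
    rw [mul_add, mul_one, exp_add, mul_comm _ (k : ℂ), exp_int_mul_two_pi_mul_I, mul_one]

theorem trigPoly_conj (hs : ∀ k ∈ s, -k ∈ s) (hc : ∀ k, c (-k) = conj (c k)) (z : ℂ) :
    trigPoly s c (conj z) = conj (trigPoly s c z) := by
  simp only [trigPoly, map_sum, map_mul, ← exp_conj]
  refine sum_nbij' Neg.neg Neg.neg hs hs (fun k _ => neg_neg k) (fun k _ => neg_neg k)
    fun k _ => ?_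
  rw [hc, conj_conj]
  congr 2
  simp only [map_ofNat, conj_ofReal, conj_I, Int.cast_neg, map_neg, map_intCast]
  ring

theorem trigPoly_eq_of_subset {t : Finset ℤ} (h : s ⊆ t) (hc : ∀ k ∈ t, k ∉ s → c k = 0) :
    trigPoly s c = trigPoly t c :=
  funext fun _ => sum_subset h fun k hkt hks => by rw [hc k hkt hks, zero_mul]

theorem norm_trigPoly_le_sup'_grid_add {ρ : ℝ} (hρ : 0 ≤ ρ) {N : ℕ} (hN : (range N).Nonempty)
    (t : ℝ) :
    ‖trigPoly s c (t + ρ * I)‖ ≤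
      (range N).sup' hN (fun j => ‖trigPoly s c ((j : ℂ) / N + ρ * I)‖) +
        1 / (2 * N) * ∑ k ∈ s, 2 * π * |(k : ℝ)| * ‖c k‖ * Real.exp (2 * π * |(k : ℝ)| * ρ) := by
  have hline : ∀ t : ℝ, (t + ρ * I : ℂ) ∈ stripC ρ := fun t => by
    simp [stripC, abs_of_nonneg hρ]
  have hper : Function.Periodic (fun t : ℝ => trigPoly s c (t + ρ * I)) 1 := fun t => by
    simpa only [ofReal_add, ofReal_one, add_right_comm] using trigPoly_periodic s c (t + ρ * I)
  have hderiv : ∀ t : ℝ, HasDerivAt (fun t : ℝ => trigPoly s c (t + ρ * I))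
      (trigPoly s (fun k => 2 * π * I * k * c k) (t + ρ * I)) t := fun t =>
    ((hasDerivAt_trigPoly s _ _).comp_add_const _ _).comp_ofReal
  have hbound : ∀ t : ℝ, ‖trigPoly s (fun k => 2 * π * I * k * c k) (t + ρ * I)‖ ≤
      ∑ k ∈ s, 2 * π * |(k : ℝ)| * ‖c k‖ * Real.exp (2 * π * |(k : ℝ)| * ρ) := fun t => by
    refine (norm_trigPoly_le s _ (hline t)).trans_eq (sum_congr rfl fun k _ => ?_)
    simp [abs_of_pos Real.pi_pos]
  simpa only [ofReal_div, ofReal_natCast] using hper.norm_le_sup'_grid_add hderiv hbound hN t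

theorem norm_trigPoly_le_sup'_grid_add_of_norm_conj
    (hconj : ∀ z, ‖trigPoly s c (conj z)‖ = ‖trigPoly s c z‖) {ρ : ℝ} (hρ : 0 ≤ ρ) {N : ℕ}
    (hN : (range N).Nonempty) {z : ℂ} (hz : z ∈ stripC ρ) :
    ‖trigPoly s c z‖ ≤
      (range N).sup' hN (fun j => ‖trigPoly s c ((j : ℂ) / N + ρ * I)‖) +
        1 / (2 * N) * ∑ k ∈ s, 2 * π * |(k : ℝ)| * ‖c k‖ * Real.exp (2 * π * |(k : ℝ)| * ρ) := by
  refine norm_le_of_norm_le_on_boundary_stripC (differentiable_trigPoly s c)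
    (fun w hw => norm_trigPoly_le s c hw) (fun w hw => ?_) hz
  wlog htop : w.im = ρ generalizing w
  · have hbot : w.im = -ρ := ((abs_eq hρ).1 hw).resolve_left htop
    exact hconj w ▸ this (conj w) (by simpa using hw) (by simp [hbot])
  rw [← re_add_im w, htop]
  exact norm_trigPoly_le_sup'_grid_add s c hρ hN w.re

end TrigPoly

/-- Sup-norm bound for a real trigonometric polynomial of degree `< N = 2M` on the
closed strip of half-width `ρ`: the sup over the strip is bounded by the maximum of the
values at the `N` boundary grid points `j/N + iρ` plus `(1/(2N))·Σ_k 2π|k||F̂_k|e^{2π|k|ρ}`. -/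
theorem trig_poly_sup_bound (M : ℕ) (hM : 1 ≤ M) (c : ℤ → ℂ)
    (hzero : c (-(M : ℤ)) = 0)
    (hsym : ∀ k : ℤ, c (-k) = starRingEnd ℂ (c k)) :
    ∀ ρ : ℝ, 0 ≤ ρ →
      sSup ((fun x => ‖
          (∑ k ∈ Finset.Icc (-(M : ℤ)) ((M : ℤ) - 1),
            c k * Complex.exp (2 * (Real.pi : ℂ) * Complex.I * (k : ℂ) * x))‖) '' stripC ρ) ≤
        (Finset.range (2 * M)).sup' (Finset.nonempty_range_iff.mpr (by omega))
            (fun j => ‖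
              (∑ k ∈ Finset.Icc (-(M : ℤ)) ((M : ℤ) - 1),
                c k * Complex.exp (2 * (Real.pi : ℂ) * Complex.I * (k : ℂ) *
                  ((j : ℂ) / ((2 * M : ℕ) : ℂ) + (ρ : ℂ) * Complex.I)))‖) +
          (1 / (2 * ((2 * M : ℕ) : ℝ))) *
            ∑ k ∈ Finset.Icc (-(M : ℤ)) ((M : ℤ) - 1),
              2 * Real.pi * |(k : ℝ)| * ‖c k‖ * Real.exp (2 * Real.pi * |(k : ℝ)| * ρ) := by
  intro ρ hρ
  have hcM : c M = 0 := by rw [← neg_neg (M : ℤ), hsym, hzero, map_zero]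
  have hextend : trigPoly (Icc (-(M : ℤ)) (M - 1)) c = trigPoly (Icc (-(M : ℤ)) M) c :=
    trigPoly_eq_of_subset _ c (Icc_subset_Icc le_rfl (by omega)) fun k hk hk' => by
      obtain rfl : k = M := by simp only [mem_Icc] at hk hk'; omega
      exact hcM
  have hconj : ∀ z, ‖trigPoly (Icc (-(M : ℤ)) (M - 1)) c (conj z)‖ =
      ‖trigPoly (Icc (-(M : ℤ)) (M - 1)) c z‖ := fun z => by
    rw [hextend, trigPoly_conj _ c (fun k hk => by simp only [mem_Icc] at hk ⊢; omega) hsym,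
      norm_conj]
  refine csSup_le (Set.Nonempty.image _ ⟨0, by simp [stripC, hρ]⟩) ?_
  rintro _ ⟨z, hz, rfl⟩
  exact norm_trigPoly_le_sup'_grid_add_of_norm_conj _ c hconj hρ _ hz
end
end
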